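/- Let (P,≻,q) be a problem, N ⊊ I a proper subset of students, i ∉ N, and (ℓ_j)_{j∈I}, (k_j)_{j∈I} vectors with k_j ≥ ℓ_j > 1 for all j. Let P̂ be the profile where each student j ∈ N reports P_j^{ℓ_j} and each student j ∉ N reports P_j^{k_j}; let μ = GS(P̂, ≻, q) and ν = GS(P_i^{ℓ_i}, P̂_{-i}, ≻, q). Then the number of blocking students for ν under (P,≻,q) is at least the number of blocking students for μ under (P,≻,q). -/

import Mathlib

/-!
School choice framework following Bonkoungou–Nesterov,
"Reforms meet fairness concerns in school and college admissions".

Students `I` and schools `S` are finite types with `|I| > |S|`.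
A strict preference relation of a student over `S ∪ {∅}` is represented by a list
of `Option S` containing every element exactly once (earlier = more preferred);
`none` is the outside option.  A strict priority order of a school is a list of
`I` containing every student exactly once (earlier = higher priority).
-/

namespace SchoolChoice

variable {I S : Type*} [Fintype I] [DecidableEq I] [Fintype S] [DecidableEq S]

/-- `p` is a strict preference relation on `S ∪ {∅}`: a ranking list containing every
element of `Option S` exactly once. -/
def ValidPref (p : List (Option S)) : Prop := p.Nodup ∧ ∀ x : Option S, x ∈ p

/-- `pr` is a strict priority order: a ranking list containing every student exactly once. -/
def ValidPrio (pr : List I) : Prop := pr.Nodup ∧ ∀ i : I, i ∈ pr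

/-- `a` is strictly preferred to `b` under the preference relation `p`. -/
def prefLt (p : List (Option S)) (a b : Option S) : Prop := p.idxOf a < p.idxOf b

/-- `i` has strictly higher priority than `j` under the priority order `pr`. -/
def prioLt (pr : List I) (i j : I) : Prop := pr.idxOf i < pr.idxOf j

instance (p : List (Option S)) (a b : Option S) : Decidable (prefLt p a b) :=
  inferInstanceAs (Decidable (_ < _))

instance (pr : List I) (i j : I) : Decidable (prioLt pr i j) :=
  inferInstanceAs (Decidable (_ < _))

/-- The acceptable schools of `p` (those preferred to the outside option), in preference
order. -/
def acceptables (p : List (Option S)) : List S := (p.takeWhile Option.isSome).filterMap id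

/-- The truncation of `p` after its `k`-th acceptable school: the preference relation
listing, in the same order, only the `min k _` most-preferred acceptable schools of `p`,
all other schools being unacceptable (kept below `none` in their original order). -/
def truncate (p : List (Option S)) (k : ℕ) : List (Option S) :=
  ((acceptables p).take k).map some ++
    none :: p.filter (fun x => decide (x ≠ none ∧ x ∉ ((acceptables p).take k).map some))

/-- `μ` is a matching: it respects the capacities `q`. -/
def IsMatching (q : S → ℕ) (μ : I → Option S) : Prop :=
  ∀ s : S, (Finset.univ.filter (fun i => μ i = some s)).card ≤ q s

/-- The pair `(i, s)` blocks `μ` under the problem `(P, prio, q)`. -/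
def Blocks (P : I → List (Option S)) (prio : S → List I) (q : S → ℕ)
    (μ : I → Option S) (i : I) (s : S) : Prop :=
  prefLt (P i) (some s) (μ i) ∧
    ((Finset.univ.filter (fun j => μ j = some s)).card < q s ∨
      ∃ j : I, μ j = some s ∧ prioLt (prio s) i j)

/-- `i` is a blocking student for `μ` under `(P, prio, q)`. -/
def BlockingStudent (P : I → List (Option S)) (prio : S → List I) (q : S → ℕ)
    (μ : I → Option S) (i : I) : Prop :=
  ∃ s : S, Blocks P prio q μ i s

/-- `μ` is individually rational under `P`. -/
def IndividuallyRational (P : I → List (Option S)) (μ : I → Option S) : Prop :=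
  ∀ i : I, ¬ prefLt (P i) none (μ i)

/-- `μ` is stable at `(P, prio, q)`. -/
def IsStable (P : I → List (Option S)) (prio : S → List I) (q : S → ℕ)
    (μ : I → Option S) : Prop :=
  IndividuallyRational P μ ∧ ∀ i : I, ¬ BlockingStudent P prio q μ i

/-- The number of blocking students for `μ` under `(P, prio, q)`. -/
noncomputable def numBlocking (P : I → List (Option S)) (prio : S → List I) (q : S → ℕ)
    (μ : I → Option S) : ℕ :=
  {i : I | BlockingStudent P prio q μ i}.ncard

/-! ### The Gale–Shapley student-proposing deferred acceptance mechanism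

The state `σ : I → ℕ` records, for each student, how many of her acceptable schools
have already rejected her; she currently applies to the `σ i`-th school on her list
(if any).  At each round every school tentatively keeps the `q s` highest-priority
students among its current applicants and rejects the rest, who move on. -/

/-- The school student `i` currently applies to. -/
def daTarget (P : I → List (Option S)) (σ : I → ℕ) (i : I) : Option S :=
  (acceptables (P i))[σ i]?

/-- The students tentatively held by school `s`: the `q s` highest-priority current
applicants. -/
def daHeld (P : I → List (Option S)) (prio : S → List I) (q : S → ℕ)
    (σ : I → ℕ) (s : S) : List I :=
  ((prio s).filter (fun i => decide (daTarget P σ i = some s))).take (q s)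

/-- One round of deferred acceptance: every rejected student moves to her next choice. -/
def daStep (P : I → List (Option S)) (prio : S → List I) (q : S → ℕ)
    (σ : I → ℕ) : I → ℕ := fun i =>
  match daTarget P σ i with
  | none => σ i
  | some s => if i ∈ daHeld P prio q σ s then σ i else σ i + 1

/-- The Gale–Shapley (student-proposing deferred acceptance) mechanism.  Iterating the
round map `|I| * |S| + 1` times is guaranteed to reach the terminal state. -/
def GS (P : I → List (Option S)) (prio : S → List I) (q : S → ℕ) : I → Option S :=
  fun i =>
    let σ := (daStep P prio q)^[Fintype.card I * Fintype.card S + 1] (fun _ => 0)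
    match daTarget P σ i with
    | none => none
    | some s => if i ∈ daHeld P prio q σ s then some s else none

/-- The constrained Gale–Shapley mechanism `GS^k`. -/
def GSk (k : ℕ) (P : I → List (Option S)) (prio : S → List I) (q : S → ℕ) : I → Option S :=
  GS (fun i => truncate (P i) k) prio q

/-! ### The Boston (immediate acceptance) mechanism -/

/-- Round `t` of the Boston mechanism: each not-yet-accepted student applies to her
`t`-th ranked acceptable school (0-indexed), and each school permanently accepts, up to
its remaining capacity, its highest-priority new applicants. -/
def bostonRound (P : I → List (Option S)) (prio : S → List I) (q : S → ℕ)
    (μ : I → Option S) (t : ℕ) : I → Option S := fun i =>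
  match μ i with
  | some s => some s
  | none =>
    match (acceptables (P i))[t]? with
    | none => none
    | some s =>
      if i ∈ ((prio s).filter
            (fun j => decide (μ j = none ∧ (acceptables (P j))[t]? = some s))).take
          (q s - (Finset.univ.filter (fun j => μ j = some s)).card)
      then some s else none

/-- The Boston (immediate acceptance) mechanism. -/
def Boston (P : I → List (Option S)) (prio : S → List I) (q : S → ℕ) : I → Option S :=
  (List.range (Fintype.card S)).foldl (bostonRound P prio q) (fun _ => none)

/-- The constrained Boston mechanism `β^k`. -/
def Bostonk (k : ℕ) (P : I → List (Option S)) (prio : S → List I) (q : S → ℕ) :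
    I → Option S :=
  Boston (fun i => truncate (P i) k) prio q

/-! ### The first-preference-first mechanism -/

/-- The adjusted priority profile: each first-preference-first school (member of `fpf`)
ranks students first by the rank they assign to it under `P` (counting the ranking of the
outside option as well), ties broken by the original priority; equal-preference schools
keep their original priority. -/
def fpfPrio (fpf : Finset S) (P : I → List (Option S)) (prio : S → List I) : S → List I :=
  fun s =>
    if s ∈ fpf then
      (List.range (Fintype.card S + 1)).flatMap
        (fun r => (prio s).filter (fun i => decide ((P i).idxOf (some s) = r)))
    else prio s

/-- The first-preference-first mechanism with set `fpf` of first-preference-first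
schools: Gale–Shapley run on the adjusted priorities. -/
def FPF (fpf : Finset S) (P : I → List (Option S)) (prio : S → List I) (q : S → ℕ) :
    I → Option S :=
  GS P (fpfPrio fpf P prio) q

/-- The constrained first-preference-first mechanism `FPF^k`. -/
def FPFk (fpf : Finset S) (k : ℕ) (P : I → List (Option S)) (prio : S → List I)
    (q : S → ℕ) : I → Option S :=
  FPF fpf (fun i => truncate (P i) k) prio q

/-! ### Manipulation and equilibrium notions -/

/-- Student `i` is a manipulating student of the mechanism `φ` (with priorities and
capacities fixed) at the true profile `P`. -/
def ManipulatingStudent (φ : (I → List (Option S)) → I → Option S)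
    (P : I → List (Option S)) (i : I) : Prop :=
  ∃ Q : List (Option S), ValidPref Q ∧
    prefLt (P i) (φ (Function.update P i Q) i) (φ P i)

/-- The mechanism `φ` is not manipulable at `P`. -/
def NotManipulable (φ : (I → List (Option S)) → I → Option S)
    (P : I → List (Option S)) : Prop :=
  ∀ i : I, ¬ ManipulatingStudent φ P i

/-- `P'` is a Nash equilibrium of the game `(φ, P)` in which the sophisticated students
are the members of `M` (who may misreport, and best respond) and all other (sincere)
students report truthfully. -/
def NashEq (φ : (I → List (Option S)) → I → Option S) (P : I → List (Option S))
    (M : Finset I) (P' : I → List (Option S)) : Prop :=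
  (∀ i, ValidPref (P' i)) ∧ (∀ i ∉ M, P' i = P i) ∧
    ∀ i ∈ M, ∀ Q : List (Option S), ValidPref Q →
      ¬ prefLt (P i) (φ (Function.update P' i Q) i) (φ P' i)

/-! ### Semi-sophisticated students -/

/-- Student `i` is guaranteed her first choice `s`: `s` is her most-preferred acceptable
school and `i` is among the `q s` highest-priority students at `s`. -/
def GuaranteedFirstChoice (P : I → List (Option S)) (prio : S → List I) (q : S → ℕ)
    (i : I) (s : S) : Prop :=
  (acceptables (P i)).head? = some s ∧ (prio s).idxOf i < q s

instance (P : I → List (Option S)) (prio : S → List I) (q : S → ℕ) (i : I) (s : S) :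
    Decidable (GuaranteedFirstChoice P prio q i s) :=
  inferInstanceAs (Decidable (_ ∧ _))

/-- School `s` is competitive: at least `q s` students are guaranteed their first
choice `s`. -/
def Competitive (P : I → List (Option S)) (prio : S → List I) (q : S → ℕ) (s : S) : Prop :=
  q s ≤ (Finset.univ.filter (fun i => GuaranteedFirstChoice P prio q i s)).card

instance (P : I → List (Option S)) (prio : S → List I) (q : S → ℕ) (s : S) :
    Decidable (Competitive P prio q s) :=
  inferInstanceAs (Decidable (_ ≤ _))

/-- `P'` is a Nash equilibrium of the game `(GS^ℓ, P)` with semi-sophisticated students: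
every student guaranteed her first choice reports truthfully; every other student reports
truthfully if she has at most `ℓ` acceptable schools or all her acceptable schools are
competitive, and otherwise lists as acceptable, in the order given by her true preference,
only her acceptable schools that are not competitive. -/
def SemiSophProfile (ℓ : ℕ) (P : I → List (Option S)) (prio : S → List I) (q : S → ℕ)
    (P' : I → List (Option S)) : Prop :=
  ∀ i : I,
    ((∃ s : S, GuaranteedFirstChoice P prio q i s) → P' i = P i) ∧
    (¬ (∃ s : S, GuaranteedFirstChoice P prio q i s) →
      (((acceptables (P i)).length ≤ ℓ ∨ ∀ s ∈ acceptables (P i), Competitive P prio q s) →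
          P' i = P i) ∧
      (¬ ((acceptables (P i)).length ≤ ℓ ∨
            ∀ s ∈ acceptables (P i), Competitive P prio q s) →
          acceptables (P' i) =
            (acceptables (P i)).filter (fun s => decide (¬ Competitive P prio q s))))

/-!
Let `μ` and `ν` be the deferred-acceptance outcomes before and after the extra truncation. A
student is never rejected by a school that is hers in a stable matching, and `μ` is stable for the
longer lists; hence every student who gets a new school in `ν` strictly prefers it to her
`μ`-school, and stability of `μ` forces that school to be full in `μ` and to rank all its
`μ`-students above her. Consequently no school gains students, so at least as many students are
unmatched in `ν` as in `μ`; a school available to a student at `μ` stays available at `ν`; and a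
student who loses her seat finds it available. Blocking students of a deferred-acceptance outcome
of truncated lists are unmatched, so the `μ`-blocking students who stay unmatched still block,
every student who becomes unmatched is a new blocking student, and there are at least as many of
these as `μ`-blocking students who get a seat.
-/

theorem _root_.List.Nodup.pairwise_idxOf_lt {α : Type*} [BEq α] [LawfulBEq α] {l : List α}
    (hl : l.Nodup) : l.Pairwise (fun a b => l.idxOf a < l.idxOf b) := by
  rw [List.pairwise_iff_getElem]
  intro m n hm hn hmn
  rwa [hl.idxOf_getElem, hl.idxOf_getElem]

theorem _root_.List.Pairwise.forall_mem_take_of_le_length_filter {α : Type*} {r : α → α → Prop}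
    {p : α → Bool} {l : List α} (hl : l.Pairwise r) (hp : ∀ a b, r a b → p b → p a) {k : ℕ}
    (hk : k ≤ (l.filter p).length) : ∀ x ∈ l.take k, p x := by
  induction l generalizing k with
  | nil => simp
  | cons a l ih =>
    rcases k with _ | k
    · simp
    by_cases ha : p a
    · rw [List.filter_cons_of_pos ha, List.length_cons] at hk
      simpa [ha] using ih hl.of_cons (by omega)
    · rw [List.filter_cons_of_neg ha] at hk
      obtain ⟨b, hb⟩ := List.exists_mem_of_length_pos (by omega : 0 < (l.filter p).length)
      have hb' := List.mem_filter.1 hb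
      exact absurd (hp a b (List.rel_of_pairwise_cons hl hb'.1) hb'.2) ha

theorem _root_.Function.isFixedPt_iterate_of_lt_potential {α : Type*} {f : α → α} (φ : α → ℕ)
    {B : ℕ} (x : α) (hφ : ∀ y, f y ≠ y → φ y < φ (f y)) (hB : φ (f^[B + 1] x) ≤ B) :
    Function.IsFixedPt f (f^[B + 1] x) := by
  have key : ∀ n, Function.IsFixedPt f (f^[n] x) ∨ n ≤ φ (f^[n] x) := by
    intro n
    induction n with
    | zero => exact Or.inr (Nat.zero_le _)
    | succ n ih =>
      rw [Function.iterate_succ_apply']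
      by_cases hfix : Function.IsFixedPt f (f^[n] x)
      · exact Or.inl hfix.apply
      · have := ih.resolve_left hfix
        have := hφ _ hfix
        omega
  exact (key (B + 1)).resolve_right (by omega)

theorem _root_.Set.ncard_le_ncard_of_inter_subset_of_sdiff_subset {α : Type*} [Finite α]
    {B B' U U' : Set α} (hBU : B ⊆ U) (hB : B ∩ U' ⊆ B') (hU : U' \ U ⊆ B')
    (hcard : U.ncard ≤ U'.ncard) : B.ncard ≤ B'.ncard := by
  have h₁ := Set.ncard_inter_add_ncard_sdiff_eq_ncard B U'
  have h₂ := Set.ncard_inter_add_ncard_sdiff_eq_ncard B' U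
  have h₃ := Set.ncard_inter_add_ncard_sdiff_eq_ncard U U'
  have h₄ := Set.ncard_inter_add_ncard_sdiff_eq_ncard U' U
  rw [Set.inter_comm] at h₄
  have h₅ : (B ∩ U').ncard ≤ (B' ∩ U).ncard :=
    Set.ncard_le_ncard (Set.subset_inter hB (Set.inter_subset_left.trans hBU))
  have h₆ : (B \ U').ncard ≤ (U \ U').ncard := Set.ncard_le_ncard (Set.sdiff_subset_sdiff_left hBU)
  have h₇ : (U' \ U).ncard ≤ (B' \ U).ncard :=
    Set.ncard_le_ncard (Set.subset_sdiff.2 ⟨hU, Set.disjoint_sdiff_left⟩)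
  omega

section Preferences

variable {S : Type*} {p r : List (Option S)} {s t : S}

@[simp] lemma acceptables_cons_none (p : List (Option S)) : acceptables (none :: p) = [] := rfl

@[simp] lemma acceptables_cons_some (s : S) (p : List (Option S)) :
    acceptables (some s :: p) = s :: acceptables p := rfl

lemma acceptables_map_some_append (l : List S) (r : List (Option S)) :
    acceptables (l.map some ++ none :: r) = l := by
  induction l <;> simp_all

lemma map_some_acceptables_prefix (p : List (Option S)) : (acceptables p).map some <+: p := by
  induction p with
  | nil => exact List.nil_prefix
  | cons a p ih =>
    rcases a with _ | a
    · exact List.nil_prefix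
    · simpa using ih

lemma eq_map_some_acceptables_append (h : none ∈ p) :
    ∃ r, p = (acceptables p).map some ++ none :: r := by
  induction p with
  | nil => simp at h
  | cons a p ih =>
    rcases a with _ | a
    · exact ⟨p, rfl⟩
    · obtain ⟨r, hr⟩ := ih (by simpa using h)
      exact ⟨r, by simp [← hr]⟩

lemma ValidPref.nodup_acceptables (hp : ValidPref p) : (acceptables p).Nodup :=
  ((map_some_acceptables_prefix p).sublist.nodup hp.1).of_map some

variable [DecidableEq S]

lemma prefLt.trans {a b c : Option S} (hab : prefLt p a b) (hbc : prefLt p b c) :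
    prefLt p a c :=
  Nat.lt_trans hab hbc

lemma idxOf_map_some (l : List S) (s : S) : (l.map some).idxOf (some s) = l.idxOf s := by
  induction l with
  | nil => rfl
  | cons a l ih => by_cases h : a = s <;> simp_all

lemma idxOf_some_of_mem_acceptables (hs : s ∈ acceptables p) :
    p.idxOf (some s) = (acceptables p).idxOf s := by
  rw [← (map_some_acceptables_prefix p).idxOf_eq_of_mem (List.mem_map_of_mem hs), idxOf_map_some]

lemma ValidPref.idxOf_none (hp : ValidPref p) : p.idxOf none = (acceptables p).length := by
  obtain ⟨r, hr⟩ := eq_map_some_acceptables_append (hp.2 none)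
  conv_lhs => rw [hr, List.idxOf_append_of_notMem (by simp)]
  simp

lemma ValidPref.length_lt_idxOf_some (hp : ValidPref p) (hs : s ∉ acceptables p) :
    (acceptables p).length < p.idxOf (some s) := by
  obtain ⟨r, hr⟩ := eq_map_some_acceptables_append (hp.2 none)
  conv_rhs => rw [hr, List.idxOf_append_of_notMem (by simpa using hs)]
  simp

lemma ValidPref.mem_acceptables_iff (hp : ValidPref p) :
    s ∈ acceptables p ↔ prefLt p (some s) none := by
  rw [prefLt, hp.idxOf_none]
  by_cases hs : s ∈ acceptables p
  · rw [idxOf_some_of_mem_acceptables hs]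
    exact iff_of_true hs (List.idxOf_lt_length_of_mem hs)
  · exact iff_of_false hs (not_lt.2 (hp.length_lt_idxOf_some hs).le)

lemma ValidPref.prefLt_none_some_iff (hp : ValidPref p) :
    prefLt p none (some s) ↔ s ∉ acceptables p := by
  rw [prefLt, hp.idxOf_none]
  by_cases hs : s ∈ acceptables p
  · rw [idxOf_some_of_mem_acceptables hs]
    exact iff_of_false (not_lt.2 (List.idxOf_lt_length_of_mem hs).le) (not_not.2 hs)
  · exact iff_of_true (hp.length_lt_idxOf_some hs) hs

lemma prefLt_some_some_iff (hs : s ∈ acceptables p) (ht : t ∈ acceptables p) :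
    prefLt p (some s) (some t) ↔ (acceptables p).idxOf s < (acceptables p).idxOf t := by
  rw [prefLt, idxOf_some_of_mem_acceptables hs, idxOf_some_of_mem_acceptables ht]

lemma acceptables_truncate (p : List (Option S)) (m : ℕ) :
    acceptables (truncate p m) = (acceptables p).take m :=
  acceptables_map_some_append _ _

lemma ValidPref.truncate (hp : ValidPref p) (m : ℕ) : ValidPref (truncate p m) := by
  have hA : (((acceptables p).take m).map some).Nodup :=
    ((hp.nodup_acceptables.sublist (List.take_sublist m _))).map (Option.some_injective S)
  have hsome : ∀ x ∈ ((acceptables p).take m).map some, x ≠ none :=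
    List.forall_mem_map.2 fun _ _ => Option.some_ne_none _
  rw [SchoolChoice.truncate]
  generalize ((acceptables p).take m).map some = A at hA hsome
  refine ⟨?_, fun x => ?_⟩
  · simp only [List.nodup_append, List.nodup_cons, hA, hp.1.filter]
    grind
  · by_cases hx : x ∈ A
    · simp [hx]
    · rcases x with _ | x <;> simp_all [hp.2]

lemma ValidPref.prefLt_of_prefix (hp : ValidPref p) (hrp : acceptables r <+: acceptables p)
    (ht : t ∈ acceptables r) (h : prefLt p (some s) (some t)) : prefLt r (some s) (some t) := by
  have htp := hrp.subset ht
  have hsp : s ∈ acceptables p := hp.mem_acceptables_iff.2 (h.trans (hp.mem_acceptables_iff.1 htp))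
  rw [prefLt_some_some_iff hsp htp] at h
  have hsr : s ∈ acceptables r :=
    (hrp.mem_iff_idxOf_lt_length s).2 (h.trans ((hrp.mem_iff_idxOf_lt_length t).1 ht))
  rwa [prefLt_some_some_iff hsr ht, hrp.idxOf_eq_of_mem hsr, hrp.idxOf_eq_of_mem ht]

lemma ValidPref.prefLt_some_of_idxOf_le (hp : ValidPref p)
    (hrp : acceptables r <+: acceptables p) (hs : s ∈ acceptables r) {a : Option S}
    (ha : ¬ prefLt p none a) (hne : a ≠ some s)
    (hle : ∀ t, a = some t → t ∈ acceptables r →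
      (acceptables r).idxOf s ≤ (acceptables r).idxOf t) :
    prefLt p (some s) a := by
  have hsp := hrp.subset hs
  rcases a with _ | t
  · exact hp.mem_acceptables_iff.1 hsp
  have htp : t ∈ acceptables p := not_not.1 (mt hp.prefLt_none_some_iff.2 ha)
  rw [prefLt_some_some_iff hsp htp, ← hrp.idxOf_eq_of_mem hs]
  by_cases htr : t ∈ acceptables r
  · rw [← hrp.idxOf_eq_of_mem htr]
    exact (hle t rfl htr).lt_of_ne fun h => hne (by rw [(List.idxOf_inj hs).1 h])
  · exact (List.idxOf_lt_length_of_mem hs).trans_le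
      (not_lt.1 (mt (hrp.mem_iff_idxOf_lt_length t).2 htr))

end Preferences

section DeferredAcceptance

variable {I S : Type*} [DecidableEq S] {R : I → List (Option S)}
  {prio : S → List I} {q : S → ℕ} {σ : I → ℕ} {j : I} {s : S}

def daApplicants (R : I → List (Option S)) (prio : S → List I) (σ : I → ℕ) (s : S) : List I :=
  (prio s).filter (fun j => decide (daTarget R σ j = some s))

lemma daHeld_eq_take (R : I → List (Option S)) (prio : S → List I) (q : S → ℕ) (σ : I → ℕ)
    (s : S) : daHeld R prio q σ s = (daApplicants R prio σ s).take (q s) :=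
  rfl

lemma daTarget_of_mem_daApplicants (h : j ∈ daApplicants R prio σ s) :
    daTarget R σ j = some s := by
  simpa using (List.mem_filter.1 h).2

lemma mem_daApplicants_iff (hprio : ValidPrio (prio s)) :
    j ∈ daApplicants R prio σ s ↔ daTarget R σ j = some s :=
  ⟨daTarget_of_mem_daApplicants, fun h => List.mem_filter.2 ⟨hprio.2 j, by simpa using h⟩⟩

lemma daTarget_of_mem_daHeld (h : j ∈ daHeld R prio q σ s) : daTarget R σ j = some s :=
  daTarget_of_mem_daApplicants (List.take_subset _ _ h)

lemma nodup_daHeld (hprio : (prio s).Nodup) (q : S → ℕ) (σ : I → ℕ) :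
    (daHeld R prio q σ s).Nodup :=
  (hprio.filter _).sublist (List.take_sublist _ _)

lemma daTarget_eq_some_iff (hR : (acceptables (R j)).Nodup) :
    daTarget R σ j = some s ↔ s ∈ acceptables (R j) ∧ (acceptables (R j)).idxOf s = σ j := by
  rw [daTarget]
  constructor
  · intro h
    obtain ⟨hlt, rfl⟩ := List.getElem?_eq_some_iff.1 h
    exact ⟨List.getElem_mem hlt, hR.idxOf_getElem _ hlt⟩
  · rintro ⟨hs, h⟩
    rw [← h]
    exact List.getElem?_idxOf hs

lemma lt_of_prefLt_daTarget (hR : ValidPref (R j))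
    (h : prefLt (R j) (some s) (daTarget R σ j)) :
    s ∈ acceptables (R j) ∧ (acceptables (R j)).idxOf s < σ j := by
  rcases ht : daTarget R σ j with _ | t <;> rw [ht] at h
  · have hs := hR.mem_acceptables_iff.2 h
    exact ⟨hs, (List.idxOf_lt_length_of_mem hs).trans_le (List.getElem?_eq_none_iff.1 ht)⟩
  · obtain ⟨htR, hidx⟩ := (daTarget_eq_some_iff hR.nodup_acceptables).1 ht
    have hs := hR.mem_acceptables_iff.2 (h.trans (hR.mem_acceptables_iff.1 htR))
    exact ⟨hs, hidx ▸ (prefLt_some_some_iff hs htR).1 h⟩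

variable [DecidableEq I]

lemma pairwise_daApplicants (hprio : (prio s).Nodup) :
    (daApplicants R prio σ s).Pairwise (prioLt (prio s)) :=
  hprio.pairwise_idxOf_lt.sublist List.filter_sublist

lemma daStep_eq_or (σ : I → ℕ) (j : I) :
    daStep R prio q σ j = σ j ∨ daStep R prio q σ j = σ j + 1 ∧
      ∃ s, daTarget R σ j = some s ∧ j ∉ daHeld R prio q σ s := by
  unfold daStep
  rcases daTarget R σ j with _ | s
  · exact Or.inl rfl
  · by_cases hj : j ∈ daHeld R prio q σ s
    · exact Or.inl (if_pos hj)
    · exact Or.inr ⟨if_neg hj, s, rfl, hj⟩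

lemma le_daStep (σ : I → ℕ) (j : I) : σ j ≤ daStep R prio q σ j := by
  rcases daStep_eq_or (R := R) (prio := prio) (q := q) σ j with h | ⟨h, -⟩ <;> omega

lemma daStep_le_length (h : σ j ≤ (acceptables (R j)).length) :
    daStep R prio q σ j ≤ (acceptables (R j)).length := by
  rcases daStep_eq_or (R := R) (prio := prio) (q := q) σ j with h' | ⟨h', s, hs, -⟩
  · omega
  · have := (List.getElem?_eq_some_iff.1 hs).1
    omega

lemma daStep_of_mem_daHeld (h : j ∈ daHeld R prio q σ s) : daStep R prio q σ j = σ j := by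
  simp [daStep, daTarget_of_mem_daHeld h, h]

lemma daTarget_daStep_of_mem_daHeld (h : j ∈ daHeld R prio q σ s) :
    daTarget R (daStep R prio q σ) j = some s := by
  rw [daTarget, daStep_of_mem_daHeld h]
  exact daTarget_of_mem_daHeld h

lemma daHeld_full_of_not_mem (hprio : (prio s).Nodup) (hj : j ∈ daApplicants R prio σ s)
    (hnj : j ∉ daHeld R prio q σ s) :
    (daHeld R prio q σ s).length = q s ∧ ∀ j' ∈ daHeld R prio q σ s, prioLt (prio s) j' j := by
  rw [daHeld_eq_take] at hnj ⊢
  have hjd : j ∈ (daApplicants R prio σ s).drop (q s) := by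
    rw [← List.take_append_drop (q s) (daApplicants R prio σ s)] at hj
    exact (List.mem_append.1 hj).resolve_left hnj
  refine ⟨List.length_take_of_le ?_, fun j' hj' => ?_⟩
  · by_contra hlt
    simp [List.drop_eq_nil_of_le (not_le.1 hlt).le] at hjd
  · exact (pairwise_daApplicants hprio).rel_of_mem_take_of_mem_drop hj' hjd

/-- The invariant of deferred acceptance: `t < σ j` with `s` the `t`-th choice of `j` means that
`s` has rejected `j`, and then `s` still has at least `q s` applicants ranked above `j`. -/
def RejectionsJustified (R : I → List (Option S)) (prio : S → List I) (q : S → ℕ)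
    (σ : I → ℕ) : Prop :=
  ∀ j s t, t < σ j → (acceptables (R j))[t]? = some s →
    q s ≤ ((daApplicants R prio σ s).filter (fun j' => decide (prioLt (prio s) j' j))).length

lemma RejectionsJustified.daHeld_full (hprio : (prio s).Nodup) (h : RejectionsJustified R prio q σ)
    {t : ℕ} (ht : t < σ j) (hts : (acceptables (R j))[t]? = some s) :
    (daHeld R prio q σ s).length = q s ∧ ∀ j' ∈ daHeld R prio q σ s, prioLt (prio s) j' j := by
  have hq := h j s t ht hts
  refine ⟨List.length_take_of_le (hq.trans (List.length_filter_le _ _)), fun j' hj' => ?_⟩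
  exact of_decide_eq_true <| (pairwise_daApplicants hprio).forall_mem_take_of_le_length_filter
    (fun a b hab hb => decide_eq_true (Nat.lt_trans hab (of_decide_eq_true hb))) hq j' hj'

lemma RejectionsJustified.step (hprio : ∀ s, ValidPrio (prio s))
    (h : RejectionsJustified R prio q σ) : RejectionsJustified R prio q (daStep R prio q σ) := by
  intro j s t ht hts
  have hfull : (daHeld R prio q σ s).length = q s ∧
      ∀ j' ∈ daHeld R prio q σ s, prioLt (prio s) j' j := by
    by_cases htj : t < σ j
    · exact h.daHeld_full (hprio s).1 htj hts
    rcases daStep_eq_or (R := R) (prio := prio) (q := q) σ j with h' | ⟨h', s', hs', hrej⟩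
    · omega
    obtain rfl : s = s' := by
      rw [daTarget, show σ j = t by omega, hts] at hs'
      exact Option.some_inj.1 hs'
    exact daHeld_full_of_not_mem (hprio s).1 ((mem_daApplicants_iff (hprio s)).2 hs') hrej
  have hsub : daHeld R prio q σ s ⊆ (daApplicants R prio (daStep R prio q σ) s).filter
      (fun j' => decide (prioLt (prio s) j' j)) := fun j' hj' =>
    List.mem_filter.2 ⟨(mem_daApplicants_iff (hprio s)).2 (daTarget_daStep_of_mem_daHeld hj'),
      decide_eq_true (hfull.2 j' hj')⟩
  exact hfull.1 ▸ (List.subperm_of_subset (nodup_daHeld (hprio s).1 q σ) hsub).length_le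

variable [Fintype I] [Fintype S]

def daFinal (R : I → List (Option S)) (prio : S → List I) (q : S → ℕ) : I → ℕ :=
  (daStep R prio q)^[Fintype.card I * Fintype.card S + 1] (fun _ => 0)

lemma rejectionsJustified_daFinal (hprio : ∀ s, ValidPrio (prio s)) :
    RejectionsJustified R prio q (daFinal R prio q) := by
  have : ∀ n, RejectionsJustified R prio q ((daStep R prio q)^[n] fun _ => 0) := by
    intro n
    induction n with
    | zero => intro j s t ht; simp at ht
    | succ n ih =>
      rw [Function.iterate_succ_apply']
      exact ih.step hprio
  exact this _

lemma isFixedPt_daFinal (hR : ∀ j, (acceptables (R j)).Nodup) :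
    Function.IsFixedPt (daStep R prio q) (daFinal R prio q) := by
  refine Function.isFixedPt_iterate_of_lt_potential (fun σ => ∑ j, σ j) _ (fun σ hσ => ?_) ?_
  · obtain ⟨j, hj⟩ := Function.ne_iff.1 hσ
    exact Finset.sum_lt_sum (fun j _ => le_daStep σ j)
      ⟨j, Finset.mem_univ j, (le_daStep σ j).lt_of_ne' hj⟩
  · have hle : ∀ n j, (daStep R prio q)^[n] (fun _ => 0) j ≤ (acceptables (R j)).length := by
      intro n j
      induction n with
      | zero => exact Nat.zero_le _
      | succ n ih =>
        rw [Function.iterate_succ_apply']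
        exact daStep_le_length ih
    calc ∑ j, _ ≤ Finset.univ.card • Fintype.card S :=
          Finset.sum_le_card_nsmul _ _ _ fun j _ => (hle _ j).trans (hR j).length_le_card
      _ = _ := by simp

lemma mem_daHeld_daFinal (hR : ∀ j, (acceptables (R j)).Nodup)
    (h : daTarget R (daFinal R prio q) j = some s) : j ∈ daHeld R prio q (daFinal R prio q) s := by
  by_contra hj
  have := isFixedPt_daFinal (prio := prio) (q := q) hR
  have := congrFun this j
  simp [daStep, h, hj] at this

lemma GS_eq_daTarget (hR : ∀ j, (acceptables (R j)).Nodup) :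
    GS R prio q = daTarget R (daFinal R prio q) := by
  funext j
  change (match daTarget R (daFinal R prio q) j with
    | none => none
    | some s => if j ∈ daHeld R prio q (daFinal R prio q) s then some s else none) = _
  rcases h : daTarget R (daFinal R prio q) j with _ | s
  · rfl
  · exact if_pos (mem_daHeld_daFinal hR h)

lemma mem_acceptables_of_GS_eq_some (hR : ∀ j, (acceptables (R j)).Nodup)
    (h : GS R prio q j = some s) : s ∈ acceptables (R j) :=
  ((daTarget_eq_some_iff (hR j)).1 (GS_eq_daTarget hR ▸ h)).1

lemma mem_daHeld_daFinal_iff (hR : ∀ j, (acceptables (R j)).Nodup) :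
    j ∈ daHeld R prio q (daFinal R prio q) s ↔ GS R prio q j = some s := by
  rw [GS_eq_daTarget hR]
  exact ⟨daTarget_of_mem_daHeld, mem_daHeld_daFinal hR⟩

lemma filter_GS_eq_some (hR : ∀ j, (acceptables (R j)).Nodup) :
    Finset.univ.filter (fun j => GS R prio q j = some s) =
      (daHeld R prio q (daFinal R prio q) s).toFinset := by
  ext j
  simp [mem_daHeld_daFinal_iff hR]

theorem GS_isMatching (hR : ∀ j, (acceptables (R j)).Nodup) : IsMatching q (GS R prio q) :=
  fun s => by
    rw [filter_GS_eq_some hR]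
    exact (List.toFinset_card_le _).trans (List.length_take_le _ _)

theorem GS_isStable (hR : ∀ j, ValidPref (R j)) (hprio : ∀ s, ValidPrio (prio s)) :
    IsStable R prio q (GS R prio q) := by
  have hnodup j := (hR j).nodup_acceptables
  refine ⟨fun j h => ?_, fun j ⟨s, hpl, havail⟩ => ?_⟩
  · rcases hj : GS R prio q j with _ | s <;> rw [hj] at h
    · exact lt_irrefl _ h
    · exact (hR j).prefLt_none_some_iff.1 h (mem_acceptables_of_GS_eq_some hnodup hj)
  · rw [GS_eq_daTarget hnodup] at hpl
    obtain ⟨hs, hlt⟩ := lt_of_prefLt_daTarget (hR j) hpl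
    obtain ⟨hlen, hbeat⟩ :=
      (rejectionsJustified_daFinal hprio).daHeld_full (hprio s).1 hlt (List.getElem?_idxOf hs)
    rcases havail with hvac | ⟨j₁, hj₁, hlt₁⟩
    · rw [filter_GS_eq_some hnodup, List.toFinset_card_of_nodup (nodup_daHeld (hprio s).1 _ _),
        hlen] at hvac
      exact lt_irrefl _ hvac
    · exact lt_asymm hlt₁ (hbeat j₁ ((mem_daHeld_daFinal_iff hnodup).2 hj₁))

end DeferredAcceptance

section StablePartners

variable {I S : Type*} [DecidableEq S] {R P : I → List (Option S)} {prio : S → List I}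
  {q : S → ℕ} {α : I → Option S} {σ : I → ℕ} {j : I} {s : S}

/-- In the proposal state `σ`, no student has yet been rejected by her `α`-school. -/
def NotRejectedBy (R : I → List (Option S)) (α : I → Option S) (σ : I → ℕ) : Prop :=
  ∀ j s, α j = some s → s ∈ acceptables (R j) → σ j ≤ (acceptables (R j)).idxOf s

lemma NotRejectedBy.prefLt (hP : ValidPref (P j)) (hRP : acceptables (R j) <+: acceptables (P j))
    (hR : (acceptables (R j)).Nodup) (h : NotRejectedBy R α σ) (hα : ¬ prefLt (P j) none (α j))
    (ht : daTarget R σ j = some s) (hne : α j ≠ some s) : prefLt (P j) (some s) (α j) := by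
  obtain ⟨hs, hidx⟩ := (daTarget_eq_some_iff hR).1 ht
  exact hP.prefLt_some_of_idxOf_le hRP hs hα hne fun t ht htR => hidx ▸ h j t ht htR

variable [Fintype I] [DecidableEq I]

lemma exists_mem_ne_of_isMatching (hα : IsMatching q α) {l : List I} (hl : l.Nodup)
    (hlen : l.length = q s) (hj : j ∉ l) (hjs : α j = some s) : ∃ j' ∈ l, α j' ≠ some s := by
  have hlt : (Finset.univ.filter (fun j' => α j' = some s)).card < (insert j l.toFinset).card := by
    rw [Finset.card_insert_of_notMem (by simpa using hj), List.toFinset_card_of_nodup hl, hlen]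
    exact Nat.lt_succ_of_le (hα s)
  obtain ⟨j', hj', hne⟩ := Finset.exists_mem_notMem_of_card_lt_card hlt
  simp only [Finset.mem_insert, List.mem_toFinset, Finset.mem_filter, Finset.mem_univ,
    true_and] at hj' hne
  rcases hj' with rfl | hj'
  · exact absurd hjs hne
  · exact ⟨j', hj', hne⟩

/-- The classical argument that a student is never rejected by a stable partner: the first such
rejection would be caused by a student who prefers that school to her own stable partner and has
higher priority there, a blocking pair for `α`. -/
lemma NotRejectedBy.step (hR : ∀ j, (acceptables (R j)).Nodup) (hprio : ∀ s, ValidPrio (prio s))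
    (hP : ∀ j, ValidPref (P j)) (hRP : ∀ j, acceptables (R j) <+: acceptables (P j))
    (hαm : IsMatching q α) (hα : IsStable P prio q α) (h : NotRejectedBy R α σ) :
    NotRejectedBy R α (daStep R prio q σ) := by
  intro j s hjs hs
  rcases daStep_eq_or (R := R) (prio := prio) (q := q) σ j with h' | ⟨h', t, ht, hrej⟩
  · exact h' ▸ h j s hjs hs
  suffices σ j ≠ (acceptables (R j)).idxOf s by have := h j s hjs hs; omega
  intro hσ
  obtain rfl : s = t :=
    Option.some_inj.1 (((daTarget_eq_some_iff (hR j)).2 ⟨hs, hσ.symm⟩).symm.trans ht)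
  obtain ⟨hlen, hbeat⟩ :=
    daHeld_full_of_not_mem (hprio s).1 ((mem_daApplicants_iff (hprio s)).2 ht) hrej
  obtain ⟨j', hj', hne⟩ :=
    exists_mem_ne_of_isMatching hαm (nodup_daHeld (hprio s).1 q σ) hlen hrej hjs
  exact hα.2 j' ⟨s, h.prefLt (hP j') (hRP j') (hR j') (hα.1 j') (daTarget_of_mem_daHeld hj') hne,
    Or.inr ⟨j, hjs, hbeat j' hj'⟩⟩

variable [Fintype S]

lemma notRejectedBy_daFinal (hR : ∀ j, (acceptables (R j)).Nodup)
    (hprio : ∀ s, ValidPrio (prio s)) (hP : ∀ j, ValidPref (P j))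
    (hRP : ∀ j, acceptables (R j) <+: acceptables (P j)) (hαm : IsMatching q α)
    (hα : IsStable P prio q α) : NotRejectedBy R α (daFinal R prio q) := by
  have : ∀ n, NotRejectedBy R α ((daStep R prio q)^[n] fun _ => 0) := by
    intro n
    induction n with
    | zero => intro j s _ _; exact Nat.zero_le _
    | succ n ih =>
      rw [Function.iterate_succ_apply']
      exact ih.step hR hprio hP hRP hαm hα
  exact this _

theorem prefLt_of_GS_eq_some (hR : ∀ j, (acceptables (R j)).Nodup)
    (hprio : ∀ s, ValidPrio (prio s)) (hP : ∀ j, ValidPref (P j))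
    (hRP : ∀ j, acceptables (R j) <+: acceptables (P j)) (hαm : IsMatching q α)
    (hα : IsStable P prio q α) (hj : GS R prio q j = some s) (hne : α j ≠ some s) :
    prefLt (P j) (some s) (α j) :=
  (notRejectedBy_daFinal hR hprio hP hRP hαm hα).prefLt (hP j) (hRP j) (hR j) (hα.1 j)
    (GS_eq_daTarget hR ▸ hj) hne

end StablePartners

section Arrivals

variable {I S : Type*} [DecidableEq I] {j j' : I}

lemma ValidPrio.prioLt_of_not_prioLt {pr : List I} (hpr : ValidPrio pr) (hne : j ≠ j')
    (h : ¬ prioLt pr j j') : prioLt pr j' j :=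
  (not_lt.1 h).lt_of_ne fun h' => hne ((List.idxOf_inj (hpr.2 j')).1 h').symm

variable [Fintype I] [DecidableEq S] {prio : S → List I} {q : S → ℕ} {μ ν : I → Option S} {s : S}

/-- `Blocks P prio q μ j s` unfolds to `prefLt (P j) (some s) (μ j) ∧ Available prio q μ j s`. -/
def Available (prio : S → List I) (q : S → ℕ) (μ : I → Option S) (j : I) (s : S) : Prop :=
  (Finset.univ.filter (fun j' => μ j' = some s)).card < q s ∨
    ∃ j', μ j' = some s ∧ prioLt (prio s) j j'

def ArrivalsUnavailable (prio : S → List I) (q : S → ℕ) (μ ν : I → Option S) : Prop :=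
  ∀ j s, ν j = some s → μ j ≠ some s → ¬ Available prio q μ j s

namespace ArrivalsUnavailable

lemma le_card (h : ArrivalsUnavailable prio q μ ν) (hν : ν j = some s) (hμ : μ j ≠ some s) :
    q s ≤ (Finset.univ.filter (fun j' => μ j' = some s)).card :=
  not_lt.1 fun hlt => h j s hν hμ (Or.inl hlt)

lemma prioLt (h : ArrivalsUnavailable prio q μ ν) (hprio : ValidPrio (prio s))
    (hν : ν j = some s) (hμ : μ j ≠ some s) (hμ' : μ j' = some s) : prioLt (prio s) j' j :=
  hprio.prioLt_of_not_prioLt (fun he => hμ (he ▸ hμ'))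
    fun hlt => h j s hν hμ (Or.inr ⟨j', hμ', hlt⟩)

lemma card_filter_le (h : ArrivalsUnavailable prio q μ ν) (hν : IsMatching q ν) (s : S) :
    (Finset.univ.filter (fun j => ν j = some s)).card ≤
      (Finset.univ.filter (fun j => μ j = some s)).card := by
  by_cases harr : ∃ j, ν j = some s ∧ μ j ≠ some s
  · obtain ⟨j, hνj, hμj⟩ := harr
    exact (hν s).trans (h.le_card hνj hμj)
  · push Not at harr
    exact Finset.card_le_card fun j => by simpa using harr j

lemma available_of_departed (h : ArrivalsUnavailable prio q μ ν) (hprio : ValidPrio (prio s))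
    (hμm : IsMatching q μ) (hμ : μ j = some s) (hν : ν j ≠ some s) : Available prio q ν j s := by
  by_cases harr : ∃ j₂, ν j₂ = some s ∧ μ j₂ ≠ some s
  · obtain ⟨j₂, hν₂, hμ₂⟩ := harr
    exact Or.inr ⟨j₂, hν₂, h.prioLt hprio hν₂ hμ₂ hμ⟩
  · push Not at harr
    refine Or.inl ((Finset.card_lt_card ⟨fun j' => by simpa using harr j', fun hsub => ?_⟩).trans_le
      (hμm s))
    exact hν (by simpa using hsub (by simpa using hμ : j ∈ Finset.univ.filter _))

lemma available (h : ArrivalsUnavailable prio q μ ν) (hprio : ValidPrio (prio s))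
    (hμm : IsMatching q μ) (hνm : IsMatching q ν) (hj : Available prio q μ j s) :
    Available prio q ν j s := by
  rcases hj with hvac | ⟨j₁, hμ₁, hbeat⟩
  · exact Or.inl ((h.card_filter_le hνm s).trans_lt hvac)
  by_cases hν₁ : ν j₁ = some s
  · exact Or.inr ⟨j₁, hν₁, hbeat⟩
  rcases h.available_of_departed hprio hμm hμ₁ hν₁ with hvac | ⟨j₂, hν₂, hbeat₂⟩
  · exact Or.inl hvac
  · exact Or.inr ⟨j₂, hν₂, Nat.lt_trans hbeat hbeat₂⟩

variable [Fintype S]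

lemma ncard_unmatched_le (h : ArrivalsUnavailable prio q μ ν) (hν : IsMatching q ν) :
    {j | μ j = none}.ncard ≤ {j | ν j = none}.ncard := by
  have hsplit (f : I → Option S) : Fintype.card I = {j | f j = none}.ncard +
      ∑ s, (Finset.univ.filter (fun j => f j = some s)).card := by
    rw [Set.ncard_eq_toFinset_card', Set.toFinset_ofPred,
      ← Fintype.sum_option (fun o => (Finset.univ.filter (f · = o)).card)]
    exact Finset.card_eq_sum_card_fiberwise fun _ _ => Finset.mem_univ _
  have := Finset.sum_le_sum (s := Finset.univ) fun s _ => h.card_filter_le hν s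
  have := hsplit μ
  have := hsplit ν
  omega

theorem numBlocking_le (h : ArrivalsUnavailable prio q μ ν) {P : I → List (Option S)}
    (hP : ∀ j, ValidPref (P j)) (hprio : ∀ s, ValidPrio (prio s)) (hμm : IsMatching q μ)
    (hνm : IsMatching q ν) (hμP : ∀ j s, μ j = some s → s ∈ acceptables (P j))
    (hμB : ∀ j, BlockingStudent P prio q μ j → μ j = none) :
    numBlocking P prio q μ ≤ numBlocking P prio q ν := by
  refine Set.ncard_le_ncard_of_inter_subset_of_sdiff_subset (U := {j | μ j = none})
    (U' := {j | ν j = none}) hμB ?_ ?_ (h.ncard_unmatched_le hνm)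
  · rintro j ⟨⟨s, hpl, havail⟩, hν⟩
    refine ⟨s, ?_, h.available (hprio s) hμm hνm havail⟩
    rwa [show ν j = none from hν, ← hμB j ⟨s, hpl, havail⟩]
  · rintro j ⟨hν, hμ⟩
    obtain ⟨s, hs⟩ := Option.ne_none_iff_exists'.1 hμ
    replace hν : ν j = none := hν
    refine ⟨s, ?_, h.available_of_departed (hprio s) hμm hs (by simp [hν])⟩
    rw [hν]
    exact (hP j).mem_acceptables_iff.1 (hμP j s hs)

end ArrivalsUnavailable

end Arrivals

section Truncation

variable {I S : Type*} [Fintype I] [DecidableEq I] [Fintype S] [DecidableEq S]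
  {P R R' : I → List (Option S)} {prio : S → List I} {q : S → ℕ}

lemma GS_eq_none_of_blockingStudent (hP : ∀ j, ValidPref (P j)) (hR : ∀ j, ValidPref (R j))
    (hprio : ∀ s, ValidPrio (prio s)) (hRP : ∀ j, acceptables (R j) <+: acceptables (P j))
    {j : I} (hj : BlockingStudent P prio q (GS R prio q) j) : GS R prio q j = none := by
  obtain ⟨s, hpl, havail⟩ := hj
  rcases ht : GS R prio q j with _ | t
  · rfl
  have htR := mem_acceptables_of_GS_eq_some (fun j => (hR j).nodup_acceptables) ht
  rw [ht] at hpl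
  exact absurd ⟨s, ht ▸ (hP j).prefLt_of_prefix (hRP j) htR hpl, havail⟩
    ((GS_isStable hR hprio).2 j)

theorem numBlocking_GS_le_of_prefix (hP : ∀ j, ValidPref (P j)) (hR : ∀ j, ValidPref (R j))
    (hR' : ∀ j, ValidPref (R' j)) (hprio : ∀ s, ValidPrio (prio s))
    (hRP : ∀ j, acceptables (R j) <+: acceptables (P j))
    (hR'R : ∀ j, acceptables (R' j) <+: acceptables (R j)) :
    numBlocking P prio q (GS R prio q) ≤ numBlocking P prio q (GS R' prio q) := by
  have hnodup j := (hR j).nodup_acceptables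
  have hnodup' j := (hR' j).nodup_acceptables
  have harr : ArrivalsUnavailable prio q (GS R prio q) (GS R' prio q) :=
    fun j s hν hμ havail => (GS_isStable hR hprio).2 j
      ⟨s, prefLt_of_GS_eq_some hnodup' hprio hR hR'R (GS_isMatching hnodup)
        (GS_isStable hR hprio) hν hμ, havail⟩
  exact harr.numBlocking_le hP hprio (GS_isMatching hnodup) (GS_isMatching hnodup')
    (fun j s hs => (hRP j).subset (mem_acceptables_of_GS_eq_some hnodup hs))
    (fun j => GS_eq_none_of_blockingStudent hP hR hprio hRP)

end Truncation

theorem numBlocking_le_of_extra_truncation_general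
    {I S : Type*} [Fintype I] [DecidableEq I] [Fintype S] [DecidableEq S]
    (P : I → List (Option S)) (prio : S → List I) (q : S → ℕ)
    (hP : ∀ j, ValidPref (P j)) (hprio : ∀ s, ValidPrio (prio s))
    (N : Finset I) (i : I) (hi : i ∉ N)
    (lv kv : I → ℕ) (hlk : ∀ j, lv j ≤ kv j) :
    numBlocking P prio q
        (GS (fun j => truncate (P j) (if j ∈ N then lv j else kv j)) prio q) ≤
      numBlocking P prio q
        (GS (fun j => truncate (P j) (if j ∈ insert i N then lv j else kv j)) prio q) := by
  refine numBlocking_GS_le_of_prefix hP (fun j => (hP j).truncate _) (fun j => (hP j).truncate _)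
    hprio (fun j => ?_) (fun j => ?_) <;> simp only [acceptables_truncate]
  · exact List.take_prefix _ _
  · refine List.take_prefix_take_left ?_
    by_cases hj : j = i
    · subst hj
      simp [hi, hlk]
    · simp [hj]

/-- Lemma 3: let `N ⊊ I`, `i ∉ N`, and `kⱼ ≥ ℓⱼ > 1`; let `μ` be
deferred acceptance where students in `N` report their `ℓ`-truncations and the others
their `k`-truncations, and let `ν` be the same except that student `i` also reports her
`ℓᵢ`-truncation. Then `ν` has at least as many blocking students under `(P,≻,q)` as
`μ`. -/
theorem numBlocking_le_of_extra_truncation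
    {I S : Type*} [Fintype I] [DecidableEq I] [Fintype S] [DecidableEq S]
    (hIS : Fintype.card S < Fintype.card I)
    (P : I → List (Option S)) (prio : S → List I) (q : S → ℕ)
    (hP : ∀ j, ValidPref (P j)) (hprio : ∀ s, ValidPrio (prio s))
    (N : Finset I) (hN : N ≠ Finset.univ) (i : I) (hi : i ∉ N)
    (lv kv : I → ℕ) (hl : ∀ j, 1 < lv j) (hlk : ∀ j, lv j ≤ kv j) :
    numBlocking P prio q
        (GS (fun j => truncate (P j) (if j ∈ N then lv j else kv j)) prio q) ≤
      numBlocking P prio q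
        (GS (fun j => truncate (P j) (if j ∈ insert i N then lv j else kv j)) prio q) :=
  numBlocking_le_of_extra_truncation_general P prio q hP hprio N i hi lv kv hlk

end SchoolChoice
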